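/- arXiv:math/0602260 — 3 statements merged into one kernel-verified Lean document; each statement's English description precedes it below -/
import Mathlib

section
/- (Riemann's addition formula) For nonzero complex numbers x, y, u, v and complex p with |p| < 1, one has θ(xy;p)θ(x/y;p)θ(uv;p)θ(u/v;p) - θ(xv;p)θ(x/v;p)θ(uy;p)θ(u/y;p) = (u/y)·θ(yv;p)θ(y/v;p)θ(xu;p)θ(x/u;p). -/
/-!
Fix `y, u, v` and regard both sides as functions of `X = x ∈ ℂˣ`. Each product
`θ(X a^{±1}) = θ(Xa; p) θ(X/a; p)` satisfies `X² f(pX) = f(X)`, hence so does the difference `F`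
of the two sides, and `F` vanishes at `u`, `u⁻¹` and `y`. If `u² ∉ p^ℤ`, then `θ(X u^{±1})` has
only simple zeros, namely `u^{±1} p^ℤ`, where `F` vanishes as well; so `F / θ(X u^{±1})` extends
to a holomorphic function on `ℂˣ` invariant under `X ↦ pX`. Such a function is bounded by its
values on an annulus, hence constant by removable singularities and Liouville, and evaluating at
`X = y` shows that the constant is `0` when `θ(y u^{±1}) ≠ 0`. The excluded values of `u` form a
countable set, and both sides are continuous in `u`. For `p = 0`, `θ(x; 0) = 1 - x` and the
identity is polynomial.
-/

open Finset

noncomputable def pochInf (x p : ℂ) : ℂ := ∏' k : ℕ, (1 - x * p ^ k)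

noncomputable def theta (x p : ℂ) : ℂ := pochInf x p * pochInf (p / x) p

noncomputable def qps (a q p : ℂ) (n : ℤ) : ℂ :=
  if 0 ≤ n then ∏ k ∈ Finset.range n.toNat, theta (a * q ^ (k : ℤ)) p
  else (∏ k ∈ Finset.range (-n).toNat, theta (a * q ^ (n + k)) p)⁻¹

open Filter Function Topology Set Metric

variable {p x : ℂ}

lemma zpow_mul_iff_of_mul_iff {K : Type*} [CommGroupWithZero K] {p : K} (hp0 : p ≠ 0)
    {P : K → Prop} (h : ∀ x, x ≠ 0 → (P (p * x) ↔ P x)) (m : ℤ) (x : K) :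
    P (p ^ m * x) ↔ P x := by
  rcases eq_or_ne x 0 with rfl | hx
  · rw [mul_zero]
  induction m using Int.induction_on with
  | zero => rw [zpow_zero, one_mul]
  | succ n ih =>
    rw [zpow_add_one₀ hp0, mul_comm _ p, mul_assoc, h _ (by simp [hp0, hx]), ih]
  | pred n ih =>
    rw [← ih, ← h _ (mul_ne_zero (zpow_ne_zero _ hp0) hx), ← mul_assoc, ← zpow_one_add₀ hp0]
    ring_nf

lemma eq_of_continuousAt_of_eqOn_compl_countable {E : Type*} [NormedAddCommGroup E]
    {f g : ℂ → E} {S : Set ℂ} {z : ℂ} (hS : S.Countable) (hf : ContinuousAt f z)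
    (hg : ContinuousAt g z) (hfg : EqOn f g Sᶜ) : f z = g z := by
  have : (𝓝[Sᶜ] z).NeBot :=
    mem_closure_iff_nhdsWithin_neBot.mp ((hS.dense_compl ℂ).closure_eq ▸ mem_univ z)
  exact tendsto_nhds_unique (hf.tendsto.mono_left nhdsWithin_le_nhds)
    ((hg.tendsto.mono_left nhdsWithin_le_nhds).congr'
      (eventually_nhdsWithin_of_forall fun w hw => (hfg hw).symm))

lemma countable_setOf_sq_mem {S : Set ℂ} (hS : S.Countable) : {w : ℂ | w ^ 2 ∈ S}.Countable :=
  (hS.biUnion fun s _ => (Polynomial.nthRoots 2 s).toFinset.countable_toSet).mono fun w hw =>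
    mem_biUnion (x := w ^ 2) hw (by simp [Polynomial.mem_nthRoots])

lemma exists_differentiableOn_eq_mul_of_simple_zeros {U : Set ℂ} (hU : IsOpen U) {f D : ℂ → ℂ}
    (hf : DifferentiableOn ℂ f U) (hD : DifferentiableOn ℂ D U)
    (hzero : ∀ z ∈ U, D z = 0 → f z = 0 ∧ deriv D z ≠ 0) :
    ∃ G : ℂ → ℂ, DifferentiableOn ℂ G U ∧ ∀ z ∈ U, f z = G z * D z := by
  classical
  refine ⟨fun z => if D z = 0 then deriv f z / deriv D z else f z / D z, fun z₀ hz₀ => ?_,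
    fun z hz => ?_⟩
  · refine DifferentiableAt.differentiableWithinAt ?_
    by_cases hD0 : D z₀ = 0
    -- near a zero `z₀` of `D`, `f / D = dslope f z₀ / dslope D z₀`, with `dslope D z₀ z₀ = D' z₀`
    · have hU₀ := hU.mem_nhds hz₀
      have hf' := (Complex.differentiableOn_dslope hU₀).mpr hf
      have hD' := (Complex.differentiableOn_dslope hU₀).mpr hD
      have hne : ∀ᶠ z in 𝓝 z₀, dslope D z₀ z ≠ 0 :=
        (hD'.continuousOn.continuousAt hU₀).eventually_ne (by
          rw [dslope_same]; exact (hzero z₀ hz₀ hD0).2)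
      refine ((hf'.differentiableAt hU₀).div (hD'.differentiableAt hU₀) hne.self_of_nhds
        ).congr_of_eventuallyEq ?_
      filter_upwards [hne] with z hz
      rcases eq_or_ne z z₀ with rfl | hzz₀
      · simp [hD0, dslope_same]
      · have hDz : D z = (z - z₀) * dslope D z₀ z := by
          rw [← smul_eq_mul, sub_smul_dslope, hD0, sub_zero]
        have hfz : f z = (z - z₀) * dslope f z₀ z := by
          rw [← smul_eq_mul, sub_smul_dslope, (hzero z₀ hz₀ hD0).1, sub_zero]
        have hDz0 : D z ≠ 0 := hDz ▸ mul_ne_zero (sub_ne_zero.mpr hzz₀) hz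
        rw [if_neg hDz0, hDz, hfz, mul_div_mul_left _ _ (sub_ne_zero.mpr hzz₀), Pi.div_apply]
    · refine ((hf.differentiableAt (hU.mem_nhds hz₀)).div
        (hD.differentiableAt (hU.mem_nhds hz₀)) hD0).congr_of_eventuallyEq ?_
      filter_upwards [(hD.continuousOn.continuousAt (hU.mem_nhds hz₀)).eventually_ne hD0]
        with z hz
      simp [hz]
  · by_cases hDz : D z = 0
    · simp [hDz, (hzero z hz hDz).1]
    · simp [hDz]

lemma exists_zpow_mul_mem_annulus (hp : ‖p‖ < 1) (hp0 : p ≠ 0) (hx : x ≠ 0) :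
    ∃ m : ℤ, p ^ m * x ∈ closedBall 0 1 \ ball 0 ‖p‖ := by
  have hp' : 0 < ‖p‖ := norm_pos_iff.mpr hp0
  obtain ⟨n, hn⟩ := exists_mem_Ioc_zpow (norm_pos_iff.mpr hx) ((one_lt_inv₀ hp').mpr hp)
  refine ⟨n + 1, ?_, ?_⟩
  · rw [mem_closedBall_zero_iff, norm_mul, norm_zpow]
    calc ‖p‖ ^ (n + 1) * ‖x‖ ≤ ‖p‖ ^ (n + 1) * ‖p‖⁻¹ ^ (n + 1) := by gcongr; exact hn.2
      _ = 1 := by rw [← mul_zpow, mul_inv_cancel₀ hp'.ne', one_zpow]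
  · rw [mem_ball_zero_iff, norm_mul, norm_zpow, not_lt]
    calc ‖p‖ = ‖p‖ ^ (n + 1) * ‖p‖⁻¹ ^ n := by
          rw [inv_zpow, ← zpow_neg, ← zpow_add₀ hp'.ne']; simp
      _ ≤ ‖p‖ ^ (n + 1) * ‖x‖ := by gcongr; exact hn.1.le

lemma eq_of_differentiableOn_of_mul_invariant (hp : ‖p‖ < 1) (hp0 : p ≠ 0) {G : ℂ → ℂ}
    (hG : DifferentiableOn ℂ G {0}ᶜ) (hGp : ∀ z, z ≠ 0 → G (p * z) = G z) {y : ℂ}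
    (hx : x ≠ 0) (hy : y ≠ 0) : G x = G y := by
  have hA : closedBall (0 : ℂ) 1 \ ball 0 ‖p‖ ⊆ {0}ᶜ := fun z hz h0 =>
    hz.2 (by rw [mem_singleton_iff.mp h0]; exact mem_ball_self (norm_pos_iff.mpr hp0))
  obtain ⟨M, hM⟩ := ((isCompact_closedBall _ _).diff isOpen_ball).exists_bound_of_continuousOn
    (hG.continuousOn.mono hA)
  have hbound : ∀ z, z ≠ 0 → ‖G z‖ ≤ M := fun z hz => by
    obtain ⟨m, hm⟩ := exists_zpow_mul_mem_annulus hp hp0 hz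
    rw [← (zpow_mul_iff_of_mul_iff hp0 (P := (G · = G z)) (fun w hw => by rw [hGp w hw])
      m z).mpr rfl]
    exact hM _ hm
  set H := update G 0 (limUnder (𝓝[≠] 0) G)
  have hH : Differentiable ℂ H := differentiableOn_univ.mp <|
    Complex.differentiableOn_update_limUnder_of_bddAbove univ_mem
      (by rwa [← compl_eq_univ_sdiff]) ⟨M, by rintro _ ⟨z, hz, rfl⟩; exact hbound z hz.2⟩
  have hHb : Bornology.IsBounded (range H) := by
    refine isBounded_iff_forall_norm_le.mpr ⟨max M ‖H 0‖, ?_⟩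
    rintro _ ⟨z, rfl⟩
    rcases eq_or_ne z 0 with rfl | hz
    · exact le_max_right _ _
    · rw [show H z = G z from update_of_ne hz _ _]
      exact (hbound z hz).trans (le_max_left _ _)
  simpa [H, update_of_ne hx, update_of_ne hy] using hH.apply_eq_apply_of_bounded hHb x y

lemma summable_norm_mul_pow (hp : ‖p‖ < 1) (x : ℂ) : Summable fun k : ℕ => ‖x * p ^ k‖ := by
  simpa [norm_mul, norm_pow] using
    (summable_geometric_of_lt_one (norm_nonneg p) hp).mul_left ‖x‖

lemma multipliable_pochInf (hp : ‖p‖ < 1) (x : ℂ) :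
    Multipliable fun k : ℕ => 1 - x * p ^ k := by
  simpa [sub_eq_add_neg] using
    multipliable_one_add_of_summable (f := fun k : ℕ => -(x * p ^ k))
      (by simpa using summable_norm_mul_pow hp x)

lemma pochInf_eq_one_sub_mul (hp : ‖p‖ < 1) (x : ℂ) :
    pochInf x p = (1 - x) * pochInf (x * p) p := by
  have hshift : (fun k : ℕ => 1 - x * p ^ (k + 1)) = fun k => 1 - x * p * p ^ k := by
    ext k; ring
  rw [pochInf, tprod_eq_zero_mul' (hshift ▸ multipliable_pochInf hp (x * p)), hshift]
  simp [pochInf]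

lemma pochInf_zero_left : pochInf 0 p = 1 := by simp [pochInf]

lemma pochInf_eq_zero_iff (hp : ‖p‖ < 1) : pochInf x p = 0 ↔ ∃ k : ℕ, x * p ^ k = 1 := by
  constructor
  · intro h
    by_contra! hne
    refine tprod_one_add_ne_zero_of_summable (f := fun k : ℕ => -(x * p ^ k)) (fun k => ?_)
      (by simpa using summable_norm_mul_pow hp x) (by simpa [pochInf, sub_eq_add_neg] using h)
    rw [← sub_eq_add_neg, sub_ne_zero]
    exact (hne k).symm
  · rintro ⟨k, hk⟩
    exact tprod_of_exists_eq_zero ⟨k, by simp [hk]⟩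

lemma pochInf_self_ne_zero (hp : ‖p‖ < 1) : pochInf p p ≠ 0 := by
  rw [Ne, pochInf_eq_zero_iff hp]
  rintro ⟨k, hk⟩
  have : ‖p * p ^ k‖ < 1 := by
    rw [← pow_succ', norm_pow]
    exact pow_lt_one₀ (norm_nonneg p) hp (Nat.succ_ne_zero k)
  simp [hk] at this

lemma differentiable_pochInf (hp : ‖p‖ < 1) : Differentiable ℂ (pochInf · p) := by
  intro x₀
  have hprod : HasProdLocallyUniformlyOn (fun k x => 1 + -(x * p ^ k)) (pochInf · p)
      (ball 0 (‖x₀‖ + 1)) := by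
    simp only [pochInf, sub_eq_add_neg]
    refine ((summable_geometric_of_lt_one (norm_nonneg p) hp).mul_left (‖x₀‖ + 1)
      ).hasProdLocallyUniformlyOn_nat_one_add isOpen_ball
      (.of_forall fun k x hx => ?_) (fun k => by fun_prop)
    rw [norm_neg, norm_mul, norm_pow]
    exact mul_le_mul_of_nonneg_right (mem_ball_zero_iff.mp hx).le (by positivity)
  refine (hprod.differentiableOn (.of_forall fun s => ?_) isOpen_ball).differentiableAt
    (isOpen_ball.mem_nhds (mem_ball_zero_iff.mpr (lt_add_one _)))
  exact DifferentiableOn.fun_finsetProd (fun _ _ => by fun_prop)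

lemma theta_eq_one_sub_mul (hp : ‖p‖ < 1) (x : ℂ) :
    theta x p = (1 - x) * (pochInf (x * p) p * pochInf (p / x) p) := by
  rw [theta, pochInf_eq_one_sub_mul hp, mul_assoc]

lemma theta_one (hp : ‖p‖ < 1) : theta 1 p = 0 := by
  simp [theta_eq_one_sub_mul hp]

lemma theta_zero_left : theta 0 p = 1 := by
  simp [theta, pochInf_zero_left]

lemma theta_zero_right (x : ℂ) : theta x 0 = 1 - x := by
  simp [theta_eq_one_sub_mul (norm_zero.trans_lt one_pos), pochInf_zero_left]

lemma ne_zero_of_theta_eq_zero (hx : theta x p = 0) : x ≠ 0 := by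
  rintro rfl
  simp [theta_zero_left] at hx

lemma theta_inv (hp : ‖p‖ < 1) (hx : x ≠ 0) : theta x⁻¹ p = -x⁻¹ * theta x p := by
  rw [theta, pochInf_eq_one_sub_mul hp, theta_eq_one_sub_mul hp, div_inv_eq_mul,
    inv_mul_eq_div, mul_comm p x]
  field_simp
  ring

lemma theta_mul_left (hp : ‖p‖ < 1) (hp0 : p ≠ 0) (hx : x ≠ 0) :
    theta (p * x) p = -x⁻¹ * theta x p := by
  rw [← theta_inv hp hx, theta, theta, div_mul_cancel_left₀ hp0, div_inv_eq_mul, mul_comm p x]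
  ring

lemma theta_eq_zero_iff (hp : ‖p‖ < 1) (hp0 : p ≠ 0) :
    theta x p = 0 ↔ x ∈ range (p ^ · : ℤ → ℂ) := by
  constructor
  · rw [theta, mul_eq_zero, pochInf_eq_zero_iff hp, pochInf_eq_zero_iff hp]
    rintro (⟨k, hk⟩ | ⟨k, hk⟩)
    · exact ⟨-k, show p ^ (-(k : ℤ)) = x by
        rw [zpow_neg, zpow_natCast, ← eq_inv_of_mul_eq_one_left hk]⟩
    · refine ⟨k + 1, show p ^ ((k : ℤ) + 1) = x from ?_⟩
      have hx : x ≠ 0 := by rintro rfl; simp at hk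
      rw [zpow_add_one₀ hp0, zpow_natCast]
      field_simp at hk
      linear_combination hk
  · rintro ⟨m, rfl⟩
    have := (zpow_mul_iff_of_mul_iff hp0 (P := (theta · p = 0)) (fun x hx => by
      simp [theta_mul_left hp hp0 hx, hx]) m 1).mpr (theta_one hp)
    rwa [mul_one] at this

lemma differentiableOn_theta (hp : ‖p‖ < 1) : DifferentiableOn ℂ (theta · p) {0}ᶜ := by
  have hdiv : DifferentiableOn ℂ (p / ·) {0}ᶜ :=
    (differentiableOn_const p).div differentiableOn_id fun _ hx => hx
  exact (differentiable_pochInf hp).differentiableOn.mul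
    ((differentiable_pochInf hp).comp_differentiableOn hdiv)

lemma differentiableAt_theta (hp : ‖p‖ < 1) (hx : x ≠ 0) : DifferentiableAt ℂ (theta · p) x :=
  (differentiableOn_theta hp).differentiableAt (isOpen_compl_singleton.mem_nhds hx)

lemma deriv_theta_one (hp : ‖p‖ < 1) : deriv (theta · p) 1 = -pochInf p p ^ 2 := by
  have hg : DifferentiableAt ℂ (fun w => pochInf (w * p) p * pochInf (p / w) p) 1 :=
    ((differentiable_pochInf hp).differentiableAt.comp 1 (by fun_prop)).mul
      ((differentiable_pochInf hp).differentiableAt.comp 1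
        ((differentiableAt_const p).div differentiableAt_id one_ne_zero))
  have hprod : HasDerivAt (fun w => (1 - w) * (pochInf (w * p) p * pochInf (p / w) p))
      (-1 * (pochInf (1 * p) p * pochInf (p / 1) p) + (1 - 1 : ℂ) * deriv _ (1 : ℂ)) 1 :=
    ((hasDerivAt_id (1 : ℂ)).const_sub 1).mul hg.hasDerivAt
  simp_rw [← theta_eq_one_sub_mul hp] at hprod
  simp [hprod.deriv, sq]

lemma deriv_theta_mul_left (hp : ‖p‖ < 1) (hp0 : p ≠ 0) (hx : theta x p = 0) :
    p * deriv (theta · p) (p * x) = -x⁻¹ * deriv (theta · p) x := by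
  have hx0 := ne_zero_of_theta_eq_zero hx
  have hev : (fun w => -w⁻¹ * theta w p) =ᶠ[𝓝 x] fun w => theta (p * w) p := by
    filter_upwards [isOpen_compl_singleton.mem_nhds hx0] with w hw
    exact (theta_mul_left hp hp0 hw).symm
  have hshift : HasDerivAt (fun w => theta (p * w) p) (deriv (theta · p) (p * x) * p) x :=
    (differentiableAt_theta hp (mul_ne_zero hp0 hx0)).hasDerivAt.comp x
      ((hasDerivAt_id x).const_mul p |>.congr_deriv (mul_one p))
  have hfactor := (hasDerivAt_inv hx0).neg.mul (differentiableAt_theta hp hx0).hasDerivAt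
  have := hshift.unique (hfactor.congr_of_eventuallyEq hev.symm)
  rw [hx, Pi.neg_apply] at this
  linear_combination this

lemma deriv_theta_ne_zero (hp : ‖p‖ < 1) (hp0 : p ≠ 0) (hx : theta x p = 0) :
    deriv (theta · p) x ≠ 0 := by
  obtain ⟨m, rfl⟩ := (theta_eq_zero_iff hp hp0).mp hx
  have hsimple := zpow_mul_iff_of_mul_iff hp0
    (P := fun x => theta x p = 0 → deriv (theta · p) x ≠ 0) (fun x hx => by
      simp only [theta_mul_left hp hp0 hx, mul_eq_zero, neg_eq_zero, inv_eq_zero, hx, false_or]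
      refine imp_congr_right fun hθ => ?_
      rw [← mul_ne_zero_iff_left hp0, deriv_theta_mul_left hp hp0 hθ]
      simp [hx]) m 1
  rw [mul_one] at hsimple
  refine hsimple.mpr (fun _ => ?_) hx
  rw [deriv_theta_one hp]
  simpa using pochInf_self_ne_zero hp

/-- The paper's `θ(X a^{±1}; p)`. -/
noncomputable def thetaPair (p a X : ℂ) : ℂ := theta (X * a) p * theta (X / a) p

variable {a X : ℂ}

lemma thetaPair_self (hp : ‖p‖ < 1) (ha : a ≠ 0) : thetaPair p a a = 0 := by
  rw [thetaPair, div_self ha, theta_one hp, mul_zero]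

lemma thetaPair_inv_left : thetaPair p a⁻¹ = thetaPair p a := by
  ext X
  rw [thetaPair, thetaPair, div_inv_eq_mul, ← div_eq_mul_inv, mul_comm]

lemma sq_mul_thetaPair_mul_left (hp : ‖p‖ < 1) (hp0 : p ≠ 0) (ha : a ≠ 0) (hX : X ≠ 0) :
    X ^ 2 * thetaPair p a (p * X) = thetaPair p a X := by
  rw [thetaPair, thetaPair, mul_assoc, mul_div_assoc, theta_mul_left hp hp0 (mul_ne_zero hX ha),
    theta_mul_left hp hp0 (div_ne_zero hX ha)]
  field_simp

lemma sq_mul_thetaPair_inv (hp : ‖p‖ < 1) (ha : a ≠ 0) (hX : X ≠ 0) :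
    X ^ 2 * thetaPair p a X⁻¹ = thetaPair p a X := by
  rw [thetaPair, thetaPair, show X⁻¹ * a = (X / a)⁻¹ by field_simp,
    show X⁻¹ / a = (X * a)⁻¹ by field_simp, theta_inv hp (mul_ne_zero hX ha),
    theta_inv hp (div_ne_zero hX ha)]
  field_simp

lemma thetaPair_swap (hp : ‖p‖ < 1) (ha : a ≠ 0) (hX : X ≠ 0) :
    thetaPair p a X = -(X / a) * thetaPair p X a := by
  rw [thetaPair, thetaPair, ← inv_div, theta_inv hp (div_ne_zero ha hX), inv_div, mul_comm a X]
  ring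

lemma differentiableOn_thetaPair (hp : ‖p‖ < 1) (ha : a ≠ 0) :
    DifferentiableOn ℂ (thetaPair p a) {0}ᶜ :=
  ((differentiableOn_theta hp).comp (differentiableOn_id.mul_const a)
      fun _ hX => mul_ne_zero hX ha).mul
    ((differentiableOn_theta hp).comp (differentiableOn_id.div_const a)
      fun _ hX => div_ne_zero hX ha)

lemma continuousAt_thetaPair_left (hp : ‖p‖ < 1) (ha : a ≠ 0) (hX : X ≠ 0) :
    ContinuousAt (thetaPair p · X) a :=
  ((differentiableAt_theta hp (mul_ne_zero hX ha)).continuousAt.comp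
      (continuous_const_mul X).continuousAt).mul
    ((differentiableAt_theta hp (div_ne_zero hX ha)).continuousAt.comp
      (continuousAt_const.div continuousAt_id ha))

lemma thetaPair_eq_zero_iff (hp : ‖p‖ < 1) (hp0 : p ≠ 0) :
    thetaPair p a X = 0 ↔ X * a ∈ range (p ^ · : ℤ → ℂ) ∨ X / a ∈ range (p ^ · : ℤ → ℂ) := by
  rw [thetaPair, mul_eq_zero, theta_eq_zero_iff hp hp0, theta_eq_zero_iff hp hp0]

lemma countable_setOf_thetaPair_eq_zero (hp : ‖p‖ < 1) (hp0 : p ≠ 0) (ha : a ≠ 0) :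
    {X | thetaPair p a X = 0}.Countable := by
  simp only [thetaPair_eq_zero_iff hp hp0, ofPred_or]
  exact ((countable_range _).preimage (mul_left_injective₀ ha)).union
    ((countable_range _).preimage fun _ _ h => (div_left_inj' ha).mp h)

lemma deriv_thetaPair_of_theta_mul_eq_zero (hp : ‖p‖ < 1) (ha : a ≠ 0)
    (hX : theta (X * a) p = 0) :
    deriv (thetaPair p a) X = deriv (theta · p) (X * a) * a * theta (X / a) p := by
  have hX0 : X ≠ 0 := left_ne_zero_of_mul (ne_zero_of_theta_eq_zero hX)
  have hmul : HasDerivAt (fun X => theta (X * a) p) (deriv (theta · p) (X * a) * a) X :=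
    HasDerivAt.comp X (h₂ := (theta · p))
      (differentiableAt_theta hp (mul_ne_zero hX0 ha)).hasDerivAt (hasDerivAt_mul_const a)
  have hdiv : DifferentiableAt ℂ (fun X => theta (X / a) p) X :=
    DifferentiableAt.comp X (g := (theta · p)) (differentiableAt_theta hp (div_ne_zero hX0 ha))
      (differentiableAt_id.div_const a)
  rw [show thetaPair p a = fun X => theta (X * a) p * theta (X / a) p from rfl,
    (hmul.fun_mul hdiv.hasDerivAt).deriv, hX, zero_mul, add_zero]

lemma deriv_thetaPair_ne_zero (hp : ‖p‖ < 1) (hp0 : p ≠ 0) (ha : a ≠ 0)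
    (ha2 : a ^ 2 ∉ range (p ^ · : ℤ → ℂ)) (hX : thetaPair p a X = 0) :
    deriv (thetaPair p a) X ≠ 0 := by
  have hsimple : ∀ b : ℂ, b ≠ 0 → b ^ 2 ∉ range (p ^ · : ℤ → ℂ) → theta (X * b) p = 0 →
      deriv (thetaPair p b) X ≠ 0 := by
    intro b hb hb2 hXb
    rw [deriv_thetaPair_of_theta_mul_eq_zero hp hb hXb]
    refine mul_ne_zero (mul_ne_zero (deriv_theta_ne_zero hp hp0 hXb) hb) fun hXb' => hb2 ?_
    obtain ⟨i, hi⟩ := (theta_eq_zero_iff hp hp0).mp hXb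
    obtain ⟨j, hj⟩ := (theta_eq_zero_iff hp hp0).mp hXb'
    have hX0 : X ≠ 0 := left_ne_zero_of_mul (ne_zero_of_theta_eq_zero hXb)
    refine ⟨i - j, ?_⟩
    simp only [zpow_sub₀ hp0, hi, hj]
    field_simp
  rcases mul_eq_zero.mp hX with hXa | hXa
  · exact hsimple a ha ha2 hXa
  · rw [← thetaPair_inv_left]
    exact hsimple a⁻¹ (inv_ne_zero ha) (fun ⟨m, hm⟩ => ha2 ⟨-m, by simp_all [zpow_neg]⟩)
      (by rwa [← div_eq_mul_inv])

lemma exists_eq_mul_thetaPair (hp : ‖p‖ < 1) (hp0 : p ≠ 0) {u : ℂ} (hu : u ≠ 0)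
    (hu2 : u ^ 2 ∉ range (p ^ · : ℤ → ℂ)) {F : ℂ → ℂ} (hF : DifferentiableOn ℂ F {0}ᶜ)
    (hFp : ∀ X, X ≠ 0 → X ^ 2 * F (p * X) = F X) (hFu : F u = 0) (hFu' : F u⁻¹ = 0) :
    ∃ c : ℂ, ∀ X, X ≠ 0 → F X = c * thetaPair p u X := by
  have hF_zpow : ∀ m : ℤ, ∀ z, F z = 0 → F (p ^ m * z) = 0 := fun m z hz =>
    (zpow_mul_iff_of_mul_iff hp0 (P := (F · = 0)) (fun X hX => by
      rw [← hFp X hX, mul_eq_zero, or_iff_right (pow_ne_zero 2 hX)]) m z).mpr hz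
  have hF_zero : ∀ X, thetaPair p u X = 0 → F X = 0 := fun X hX => by
    rcases (thetaPair_eq_zero_iff hp hp0).mp hX with ⟨m, hm⟩ | ⟨m, hm⟩
    · rw [(eq_mul_inv_iff_mul_eq₀ hu).mpr hm.symm]
      exact hF_zpow m _ hFu'
    · rw [← (eq_div_iff hu).mp hm]
      exact hF_zpow m _ hFu
  obtain ⟨G, hG, hFG⟩ := exists_differentiableOn_eq_mul_of_simple_zeros isOpen_compl_singleton
    hF (differentiableOn_thetaPair hp hu) fun X _ hX =>
      ⟨hF_zero X hX, deriv_thetaPair_ne_zero hp hp0 hu hu2 hX⟩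
  have hGp : ∀ X, X ≠ 0 → G (p * X) = G X := by
    intro X hX
    have hcont : ∀ z, z ≠ 0 → ContinuousAt G z := fun z hz =>
      hG.continuousOn.continuousAt (isOpen_compl_singleton.mem_nhds hz)
    refine eq_of_continuousAt_of_eqOn_compl_countable
      ((countable_setOf_thetaPair_eq_zero hp hp0 hu).union (countable_singleton 0))
      ((hcont _ (mul_ne_zero hp0 hX)).comp (continuous_const_mul p).continuousAt) (hcont X hX)
      fun z hz => ?_
    simp only [mem_compl_iff, Set.mem_union, mem_ofPred_eq, mem_singleton_iff, not_or] at hz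
    have := hFp z hz.2
    rw [hFG _ (mul_ne_zero hp0 hz.2), hFG z hz.2,
      ← sq_mul_thetaPair_mul_left hp hp0 hu hz.2] at this
    have hPz : z ^ 2 * thetaPair p u (p * z) ≠ 0 := by
      rw [sq_mul_thetaPair_mul_left hp hp0 hu hz.2]; exact hz.1
    exact mul_right_cancel₀ hPz (show G (p * z) * _ = _ by linear_combination this)
  exact ⟨G 1, fun X hX => by
    rw [hFG X hX, eq_of_differentiableOn_of_mul_invariant hp hp0 hG hGp hX one_ne_zero]⟩

lemma thetaPair_addition_of_generic (hp : ‖p‖ < 1) (hp0 : p ≠ 0) {y u v : ℂ} (hx : x ≠ 0)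
    (hy : y ≠ 0) (hu : u ≠ 0) (hv : v ≠ 0) (hu2 : u ^ 2 ∉ range (p ^ · : ℤ → ℂ))
    (huy : thetaPair p u y ≠ 0) :
    thetaPair p y x * thetaPair p v u - thetaPair p v x * thetaPair p y u
      = u / y * (thetaPair p v y * thetaPair p u x) := by
  set F : ℂ → ℂ := fun X =>
    thetaPair p y X * thetaPair p v u - thetaPair p v X * thetaPair p y u
      - u / y * (thetaPair p v y * thetaPair p u X) with hF
  have hFdiff : DifferentiableOn ℂ F {0}ᶜ :=
    (((differentiableOn_thetaPair hp hy).mul_const _).sub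
      ((differentiableOn_thetaPair hp hv).mul_const _)).sub
      (((differentiableOn_thetaPair hp hu).const_mul _).const_mul _)
  have hFp : ∀ X, X ≠ 0 → X ^ 2 * F (p * X) = F X := fun X hX => by
    simp only [hF, ← sq_mul_thetaPair_mul_left hp hp0 hy hX,
      ← sq_mul_thetaPair_mul_left hp hp0 hv hX, ← sq_mul_thetaPair_mul_left hp hp0 hu hX]
    ring
  have hFu : F u = 0 := by
    simp only [hF, thetaPair_self hp hu]
    ring
  have hFinv : ∀ X, X ≠ 0 → X ^ 2 * F X⁻¹ = F X := fun X hX => by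
    simp only [hF, ← sq_mul_thetaPair_inv hp hy hX, ← sq_mul_thetaPair_inv hp hv hX,
      ← sq_mul_thetaPair_inv hp hu hX]
    ring
  have hFu' : F u⁻¹ = 0 := by
    simpa [hFu, hu] using hFinv u hu
  have hFy : F y = 0 := by
    simp only [hF, thetaPair_self hp hy, thetaPair_swap hp hu hy]
    field_simp
    ring
  obtain ⟨c, hc⟩ := exists_eq_mul_thetaPair hp hp0 hu hu2 hFdiff hFp hFu hFu'
  have hc0 : c = 0 := by simpa [hFy, huy] using hc y hy
  have := hc x hx
  rw [hc0, zero_mul] at this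
  linear_combination this

lemma thetaPair_addition (hp : ‖p‖ < 1) (hp0 : p ≠ 0) {y u v : ℂ} (hx : x ≠ 0) (hy : y ≠ 0)
    (hu : u ≠ 0) (hv : v ≠ 0) :
    thetaPair p y x * thetaPair p v u - thetaPair p v x * thetaPair p y u
      = u / y * (thetaPair p v y * thetaPair p u x) := by
  have hP : ∀ a, a ≠ 0 → ContinuousAt (thetaPair p a) u := fun a ha =>
    (differentiableOn_thetaPair hp ha).continuousOn.continuousAt
      (isOpen_compl_singleton.mem_nhds hu)
  refine eq_of_continuousAt_of_eqOn_compl_countable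
    (f := fun w => thetaPair p y x * thetaPair p v w - thetaPair p v x * thetaPair p y w)
    (g := fun w => w / y * (thetaPair p v y * thetaPair p w x))
    (((countable_setOf_sq_mem (countable_range (p ^ · : ℤ → ℂ))).union
      (countable_setOf_thetaPair_eq_zero hp hp0 hy)).union (countable_singleton 0))
    ((continuousAt_const.mul (hP v hv)).sub (continuousAt_const.mul (hP y hy)))
    ((continuousAt_id.div_const y).mul
      (continuousAt_const.mul (continuousAt_thetaPair_left hp hu hx))) fun w hw => ?_
  simp only [mem_compl_iff, Set.mem_union, mem_ofPred_eq, mem_singleton_iff, not_or] at hw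
  obtain ⟨⟨hw2, hyw⟩, hw0⟩ := hw
  exact thetaPair_addition_of_generic hp hp0 hx hy hw0 hv hw2
    (by rw [thetaPair_swap hp hw0 hy]; simp [hw0, hy, hyw])

theorem riemann_addition_formula (x y u v p : ℂ) (hx : x ≠ 0) (hy : y ≠ 0)
    (hu : u ≠ 0) (hv : v ≠ 0) (hp : ‖p‖ < 1) :
    theta (x * y) p * theta (x / y) p * theta (u * v) p * theta (u / v) p
      - theta (x * v) p * theta (x / v) p * theta (u * y) p * theta (u / y) p
    = (u / y) * (theta (y * v) p * theta (y / v) p * theta (x * u) p * theta (x / u) p) := by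
  rcases eq_or_ne p 0 with rfl | hp0
  · simp only [theta_zero_right]
    field_simp
    ring
  have h := thetaPair_addition hp hp0 hx hy hu hv
  simp only [thetaPair] at h
  linear_combination h
end

section
/- (q-Pfaff–Saalschütz via the degenerate weight) Define w₀(n,m) = [(1-bq^{2n})(1-bq^{2n-1})/((1-bq^{2n+m})(1-bq^{2n+m-1}))]·q^m for nonzero complex b, q. Then the generating function of lattice paths from (0,0) to (n,m) with positive unit steps, weighting each horizontal step (i-1,j)→(i,j) by w₀(i,j), equals (q^{1+n},bq^{1+n};q)_m / ((q,bq^{1+2n};q)_m), for all nonnegative integers n, m, assuming all denominators are nonzero. -/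
/-!
Both sides satisfy the same recurrence: the path generating function is determined by its
boundary values and the last-step recurrence, and for the right-hand side that recurrence
reduces, after cancelling the `q`-shifted factorials, to the polynomial identity
`(1 - x y)(1 - b x y) = (1 - y)(1 - b x² y) + y (1 - x)(1 - b x)` with `x = q^(n+1)`, `y = q^(m+1)`.
-/

open Finset

noncomputable def qpoch (a q : ℂ) (n : ℕ) : ℂ := ∏ j ∈ Finset.range n, (1 - a * q ^ j)

noncomputable def GF (wt : ℤ → ℤ → ℂ) (l k : ℤ) : ℕ → ℕ → ℂ
  | 0, 0 => 1
  | 0, _ + 1 => 1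
  | i + 1, 0 => GF wt l k i 0 * wt (l + i + 1) k
  | i + 1, j + 1 => GF wt l k (i + 1) j + GF wt l k i (j + 1) * wt (l + i + 1) (k + j + 1)
termination_by i j => (i, j)

theorem GF_eq_of_recurrence (wt : ℤ → ℤ → ℂ) (l k : ℤ) (F : ℕ → ℕ → ℂ)
    (h_zero : ∀ j, F 0 j = 1)
    (h_succ_zero : ∀ i, F (i + 1) 0 = F i 0 * wt (l + i + 1) k)
    (h_succ_succ : ∀ i j, F (i + 1) (j + 1) = F (i + 1) j + F i (j + 1) * wt (l + i + 1) (k + j + 1))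
    (i j : ℕ) : GF wt l k i j = F i j := by
  induction i generalizing j with
  | zero => cases j <;> rw [GF, h_zero]
  | succ i ih =>
    induction j with
    | zero => rw [GF, ih, h_succ_zero]
    | succ j ihj => rw [GF, ihj, ih, h_succ_succ]

theorem qpoch_zero (a q : ℂ) : qpoch a q 0 = 1 := Finset.prod_range_zero _

theorem qpoch_succ (a q : ℂ) (m : ℕ) : qpoch a q (m + 1) = qpoch a q m * (1 - a * q ^ m) :=
  Finset.prod_range_succ _ _

theorem qpoch_succ' (a q : ℂ) (m : ℕ) : qpoch a q (m + 1) = (1 - a) * qpoch (a * q) q m := by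
  rw [qpoch, Finset.prod_range_succ', pow_zero, mul_one, mul_comm]
  exact congrArg _ (Finset.prod_congr rfl fun j _ => by ring)

theorem qpoch_succ_mul_one_sub (a q : ℂ) (m : ℕ) :
    qpoch a q (m + 1) * (1 - a * q ^ (m + 1)) = (1 - a) * (1 - a * q) * qpoch (a * q * q) q m := by
  rw [← qpoch_succ, qpoch_succ', qpoch_succ', mul_assoc (1 - a)]

theorem qpoch_ne_zero {a q : ℂ} (h : ∀ j, 1 - a * q ^ j ≠ 0) (m : ℕ) : qpoch a q m ≠ 0 :=
  Finset.prod_ne_zero_iff.mpr fun j _ => h j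

/-- The weight `w₀`, for integer arguments as in `GF`. -/
noncomputable def degenerateWeight (b q : ℂ) (i j : ℤ) : ℂ :=
  (1 - b * q ^ (2 * i)) * (1 - b * q ^ (2 * i - 1))
    / ((1 - b * q ^ (2 * i + j)) * (1 - b * q ^ (2 * i + j - 1))) * q ^ j

noncomputable def pfaffSaalschuetz (b q : ℂ) (n m : ℕ) : ℂ :=
  qpoch (q ^ (n + 1)) q m * qpoch (b * q ^ (n + 1)) q m
    / (qpoch q q m * qpoch (b * q ^ (2 * n + 1)) q m)

section

variable {b q : ℂ}

theorem degenerateWeight_zero_right {i : ℤ} (h₁ : 1 - b * q ^ (2 * i) ≠ 0)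
    (h₂ : 1 - b * q ^ (2 * i - 1) ≠ 0) : degenerateWeight b q i 0 = 1 := by
  rw [degenerateWeight, add_zero, zpow_zero, mul_one, div_self (mul_ne_zero h₁ h₂)]

theorem degenerateWeight_natCast_succ (n m : ℕ) :
    degenerateWeight b q (n + 1) (m + 1) =
      (1 - b * q ^ (2 * n + 2)) * (1 - b * q ^ (2 * n + 1))
        / ((1 - b * q ^ (2 * n + m + 3)) * (1 - b * q ^ (2 * n + m + 2))) * q ^ (m + 1) := by
  have h₁ : (2 : ℤ) * (n + 1) = (2 * n + 2 : ℕ) := by push_cast; ring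
  have h₂ : (2 : ℤ) * (n + 1) - 1 = (2 * n + 1 : ℕ) := by push_cast; ring
  have h₃ : (2 : ℤ) * (n + 1) + (m + 1) = (2 * n + m + 3 : ℕ) := by push_cast; ring
  have h₄ : (2 : ℤ) * (n + 1) + (m + 1) - 1 = (2 * n + m + 2 : ℕ) := by push_cast; ring
  have h₅ : ((m : ℤ) + 1) = (m + 1 : ℕ) := by push_cast; ring
  rw [degenerateWeight, h₄, h₃, h₂, h₁, h₅]
  simp only [zpow_natCast]

theorem pfaffSaalschuetz_zero_left (hb : ∀ k : ℕ, 1 - b * q ^ k ≠ 0)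
    (hq : ∀ j : ℕ, 1 - q ^ (j + 1) ≠ 0) (m : ℕ) : pfaffSaalschuetz b q 0 m = 1 := by
  have hq' : ∀ j : ℕ, 1 - q * q ^ j ≠ 0 := fun j => by rw [← pow_succ']; exact hq j
  rw [pfaffSaalschuetz, zero_add, pow_one]
  exact div_self (mul_ne_zero (qpoch_ne_zero hq' m) (qpoch_ne_zero (fun j => by
    rw [mul_assoc, ← pow_succ']; exact hb _) m))

theorem pfaffSaalschuetz_zero_right (n : ℕ) : pfaffSaalschuetz b q n 0 = 1 := by
  simp only [pfaffSaalschuetz, qpoch_zero, mul_one, div_one]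

theorem pfaffSaalschuetz_succ_right (n m : ℕ) :
    pfaffSaalschuetz b q n (m + 1) = pfaffSaalschuetz b q n m
      * ((1 - q ^ (n + m + 1)) * (1 - b * q ^ (n + m + 1)))
      / ((1 - q ^ (m + 1)) * (1 - b * q ^ (2 * n + m + 1))) := by
  rw [pfaffSaalschuetz, pfaffSaalschuetz, qpoch_succ, qpoch_succ, qpoch_succ, qpoch_succ]
  simp only [div_eq_mul_inv, mul_inv]
  ring

theorem pfaffSaalschuetz_succ_right_mul (hb : ∀ k : ℕ, 1 - b * q ^ k ≠ 0)
    (hq : ∀ j : ℕ, 1 - q ^ (j + 1) ≠ 0) (n m : ℕ) :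
    pfaffSaalschuetz b q n (m + 1) * ((1 - b * q ^ (2 * n + 1)) * (1 - b * q ^ (2 * n + 2)))
      = pfaffSaalschuetz b q (n + 1) m
        * ((1 - q ^ (n + 1)) * (1 - b * q ^ (n + 1)) * (1 - b * q ^ (2 * n + m + 2)))
        / (1 - q ^ (m + 1)) := by
  have eA : qpoch (q ^ (n + 1)) q (m + 1) = (1 - q ^ (n + 1)) * qpoch (q ^ (n + 1 + 1)) q m := by
    rw [qpoch_succ', ← pow_succ]
  have eB : qpoch (b * q ^ (n + 1)) q (m + 1)
      = (1 - b * q ^ (n + 1)) * qpoch (b * q ^ (n + 1 + 1)) q m := by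
    rw [qpoch_succ', mul_assoc, ← pow_succ]
  have eC : qpoch q q (m + 1) = qpoch q q m * (1 - q ^ (m + 1)) := by
    rw [qpoch_succ, ← pow_succ']
  have eD : qpoch (b * q ^ (2 * n + 1)) q (m + 1) = (1 - b * q ^ (2 * n + 1))
      * (1 - b * q ^ (2 * n + 2)) * qpoch (b * q ^ (2 * (n + 1) + 1)) q m
      / (1 - b * q ^ (2 * n + m + 2)) := by
    have h := qpoch_succ_mul_one_sub (b * q ^ (2 * n + 1)) q m
    rwa [show b * q ^ (2 * n + 1) * q ^ (m + 1) = b * q ^ (2 * n + m + 2) by ring,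
      show b * q ^ (2 * n + 1) * q = b * q ^ (2 * n + 2) by ring,
      show b * q ^ (2 * n + 2) * q = b * q ^ (2 * (n + 1) + 1) by ring, ← eq_div_iff (hb _)] at h
  have hC : qpoch q q m ≠ 0 := qpoch_ne_zero (fun j => by rw [← pow_succ']; exact hq j) m
  have hD : qpoch (b * q ^ (2 * (n + 1) + 1)) q m ≠ 0 :=
    qpoch_ne_zero (fun j => by rw [mul_assoc, ← pow_add]; exact hb _) m
  have := hq m
  have := hb (2 * n + 1)
  have := hb (2 * n + 2)
  have := hb (2 * n + m + 2)
  rw [pfaffSaalschuetz, pfaffSaalschuetz, eA, eB, eC, eD]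
  field_simp

theorem pfaffSaalschuetz_succ_succ (hb : ∀ k : ℕ, 1 - b * q ^ k ≠ 0)
    (hq : ∀ j : ℕ, 1 - q ^ (j + 1) ≠ 0) (n m : ℕ) :
    pfaffSaalschuetz b q (n + 1) (m + 1) =
      pfaffSaalschuetz b q (n + 1) m
        + pfaffSaalschuetz b q n (m + 1) * degenerateWeight b q (n + 1) (m + 1) := by
  have := hq m
  have := hb (2 * n + m + 2)
  have := hb (2 * n + m + 3)
  have weighted : pfaffSaalschuetz b q n (m + 1) * degenerateWeight b q (n + 1) (m + 1)
      = pfaffSaalschuetz b q (n + 1) m * ((1 - q ^ (n + 1)) * (1 - b * q ^ (n + 1)) * q ^ (m + 1))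
        / ((1 - q ^ (m + 1)) * (1 - b * q ^ (2 * n + m + 3))) := by
    calc _ = pfaffSaalschuetz b q n (m + 1) * ((1 - b * q ^ (2 * n + 1)) * (1 - b * q ^ (2 * n + 2)))
            * q ^ (m + 1) / ((1 - b * q ^ (2 * n + m + 3)) * (1 - b * q ^ (2 * n + m + 2))) := by
          rw [degenerateWeight_natCast_succ]; ring
      _ = _ := by
          rw [pfaffSaalschuetz_succ_right_mul hb hq]
          field_simp
  rw [weighted, pfaffSaalschuetz_succ_right, show 2 * (n + 1) + m + 1 = 2 * n + m + 3 by ring]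
  generalize pfaffSaalschuetz b q (n + 1) m = P
  field_simp
  ring

end

theorem q_pfaff_saalschuetz_paths_general (b q : ℂ)
    (hbden : ∀ i : ℤ, (1 : ℂ) - b * q ^ i ≠ 0)
    (hqden : ∀ j : ℕ, (1 : ℂ) - q ^ (j + 1) ≠ 0)
    (n m : ℕ) :
    GF (fun i j => (1 - b * q ^ (2 * i)) * (1 - b * q ^ (2 * i - 1))
        / ((1 - b * q ^ (2 * i + j)) * (1 - b * q ^ (2 * i + j - 1))) * q ^ j) 0 0 n m
    = qpoch (q ^ (n + 1)) q m * qpoch (b * q ^ (n + 1)) q m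
      / (qpoch q q m * qpoch (b * q ^ (2 * n + 1)) q m) := by
  have hb : ∀ k : ℕ, 1 - b * q ^ k ≠ 0 := fun k => by simpa using hbden k
  refine GF_eq_of_recurrence (degenerateWeight b q) 0 0 (pfaffSaalschuetz b q)
    (pfaffSaalschuetz_zero_left hb hqden) (fun i => ?_) (fun i j => ?_) n m
  · rw [pfaffSaalschuetz_zero_right, pfaffSaalschuetz_zero_right,
      degenerateWeight_zero_right (hbden _) (hbden _), mul_one]
  · rw [zero_add, zero_add, pfaffSaalschuetz_succ_succ hb hqden]

theorem q_pfaff_saalschuetz_paths (b q : ℂ) (hb : b ≠ 0) (hq : q ≠ 0)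
    (hbden : ∀ i : ℤ, (1 : ℂ) - b * q ^ i ≠ 0)
    (hqden : ∀ j : ℕ, (1 : ℂ) - q ^ (j + 1) ≠ 0)
    (n m : ℕ) :
    GF (fun i j => (1 - b * q ^ (2 * i)) * (1 - b * q ^ (2 * i - 1))
        / ((1 - b * q ^ (2 * i + j)) * (1 - b * q ^ (2 * i + j - 1))) * q ^ j) 0 0 n m
    = qpoch (q ^ (n + 1)) q m * qpoch (b * q ^ (n + 1)) q m
      / (qpoch q q m * qpoch (b * q ^ (2 * n + 1)) q m) :=
  q_pfaff_saalschuetz_paths_general b q hbden hqden n m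
end

section
/- (Shift property of the elliptic weight) With w(n,m;a,b) the standard elliptic weight and w_{(s,t)}(n,m;a,b) := w(n,m; a q^{s+2t}, b q^{2s+t}), for all integers n, m, s, t one has w(n+s, m+t; a, b) = w_{(s,0)}(n,t;a,b) · w_{(s,t)}(n,m;a,b), assuming all theta factors in denominators are nonzero. -/
open Finset

noncomputable def w (a b q p : ℂ) (n m : ℤ) : ℂ :=
  theta (a * q ^ (n + 2*m)) p * theta (b * q ^ (2*n)) p * theta (b * q ^ (2*n - 1)) p
    * theta (a * q ^ (1 - n) / b) p * theta (a * q ^ (-n) / b) p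
  / (theta (a * q ^ n) p * theta (b * q ^ (2*n + m)) p * theta (b * q ^ (2*n + m - 1)) p
    * theta (a * q ^ (1 + m - n) / b) p * theta (a * q ^ (m - n) / b) p)
  * q ^ m

noncomputable def W (a b q p : ℂ) (l k n m : ℤ) : ℂ :=
  (qps (q ^ (1 + n - l)) q p (m - k) * qps (a * q ^ (1 + n + 2*k)) q p (m - k)
    * qps (b * q ^ (1 + n + k + l)) q p (m - k) * qps (a * q ^ (1 + k - n) / b) q p (m - k))
  / (qps q q p (m - k) * qps (a * q ^ (1 + l + 2*k)) q p (m - k)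
    * qps (b * q ^ (1 + 2*n + k)) q p (m - k) * qps (a * q ^ (1 + k - l) / b) q p (m - k))
  * ((qps (a * q ^ (1 + l + 2*k)) q p (n - l) * qps (a * q ^ (1 - n) / b) q p (n - l)
    * qps (a * q ^ (-n) / b) q p (n - l))
  / (qps (a * q ^ (1 + l)) q p (n - l) * qps (a * q ^ (1 + k - n) / b) q p (n - l)
    * qps (a * q ^ (k - n) / b) q p (n - l)))
  * (qps (b * q ^ (1 + 2*l)) q p (2*n - 2*l) / qps (b * q ^ (1 + k + 2*l)) q p (2*n - 2*l))
  * q ^ ((n - l) * k)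

/-! The identity is pure telescoping: θ enters `w` only through the three sequences
`θ(a qⁱ)`, `θ(b qⁱ)`, `θ(a qⁱ / b)`, and replacing `(a, b)` by `(a qᵘ, b qᵛ)` just shifts their
indices by `u`, `v`, `u - v`. With the shifts `(s, 2s)` and `(s + 2t, 2s + t)` every factor
in the product on the right either cancels or reappears in `w(n + s, m + t)`, so the identity
holds for arbitrary nonvanishing sequences in place of the theta values. -/

noncomputable def seqWeight (A B C : ℤ → ℂ) (q : ℂ) (n m : ℤ) : ℂ :=
  A (n + 2 * m) * B (2 * n) * B (2 * n - 1) * C (1 - n) * C (-n)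
    / (A n * B (2 * n + m) * B (2 * n + m - 1) * C (1 + m - n) * C (m - n)) * q ^ m

theorem seqWeight_add {A B C : ℤ → ℂ} {q : ℂ} (hq : q ≠ 0) (hA : ∀ i, A i ≠ 0)
    (hB : ∀ i, B i ≠ 0) (hC : ∀ i, C i ≠ 0) (n m s t : ℤ) :
    seqWeight A B C q (n + s) (m + t)
      = seqWeight (fun i => A (i + s)) (fun i => B (i + 2 * s)) (fun i => C (i - s)) q n t
        * seqWeight (fun i => A (i + (s + 2 * t))) (fun i => B (i + (2 * s + t)))
            (fun i => C (i + (t - s))) q n m := by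
  simp only [seqWeight, zpow_add₀ hq m t]
  field_simp [hA, hB, hC]
  ring_nf

theorem w_eq_seqWeight (a b q p : ℂ) (n m : ℤ) :
    w a b q p n m = seqWeight (fun i => theta (a * q ^ i) p) (fun i => theta (b * q ^ i) p)
      (fun i => theta (a * q ^ i / b) p) q n m :=
  rfl

theorem w_mul_zpow (a b q p : ℂ) (hq : q ≠ 0) (u v n m : ℤ) :
    w (a * q ^ u) (b * q ^ v) q p n m
      = seqWeight (fun i => theta (a * q ^ (i + u)) p) (fun i => theta (b * q ^ (i + v)) p)
          (fun i => theta (a * q ^ (i + (u - v)) / b) p) q n m := by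
  rw [w_eq_seqWeight]
  congr 1 <;> funext i <;> congr 1 <;> simp only [zpow_add₀ hq, zpow_sub₀ hq] <;> ring

theorem elliptic_weight_shift_general (a b q p : ℂ) (hq : q ≠ 0)
    (hA : ∀ i : ℤ, theta (a * q ^ i) p ≠ 0)
    (hB : ∀ i : ℤ, theta (b * q ^ i) p ≠ 0)
    (hAB : ∀ i : ℤ, theta (a * q ^ i / b) p ≠ 0)
    (n m s t : ℤ) :
    w a b q p (n + s) (m + t)
      = w (a * q ^ s) (b * q ^ (2 * s)) q p n t
        * w (a * q ^ (s + 2 * t)) (b * q ^ (2 * s + t)) q p n m := by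
  rw [w_eq_seqWeight, w_mul_zpow a b q p hq, w_mul_zpow a b q p hq]
  convert seqWeight_add hq hA hB hAB n m s t using 3 <;> funext i <;> ring_nf

theorem elliptic_weight_shift (a b q p : ℂ) (ha : a ≠ 0) (hb : b ≠ 0) (hq : q ≠ 0)
    (hp : ‖p‖ < 1)
    (hA : ∀ i : ℤ, theta (a * q ^ i) p ≠ 0)
    (hB : ∀ i : ℤ, theta (b * q ^ i) p ≠ 0)
    (hAB : ∀ i : ℤ, theta (a * q ^ i / b) p ≠ 0)
    (n m s t : ℤ) :
    w a b q p (n + s) (m + t)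
      = w (a * q ^ s) (b * q ^ (2 * s)) q p n t
        * w (a * q ^ (s + 2 * t)) (b * q ^ (2 * s + t)) q p n m :=
  elliptic_weight_shift_general a b q p hq hA hB hAB n m s t
end
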